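/- arXiv:2507.21840 — 6 statements merged into one kernel-verified Lean document; each statement's English description precedes it below -/
import Mathlib

section
/- Let B ⊂ ℝ^d be closed and convex, f of Legendre type and differentiable on G = int(dom f). If b⁺ is a left Bregman projection of a⁺ ∈ G onto B (i.e., b⁺ minimizes D(·, a⁺) over B) with b⁺ ∈ G, then for every b ∈ B ∩ dom f one has D(b, a⁺) ≥ D(b⁺, a⁺) + D(b, b⁺). In particular the rl-three-point inequality holds with constant ℓ = 1. -/
/-!
Minimality of `b⁺` for `D(·, a⁺)` over the convex set `B` gives, by differentiating along the
segment from `b⁺` to `b`, the variational inequality `⟪∇f(b⁺) - ∇f(a⁺), b - b⁺⟫ ≥ 0`.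
The three-point identity `D(b, a⁺) - D(b⁺, a⁺) - D(b, b⁺) = ⟪∇f(b⁺) - ∇f(a⁺), b - b⁺⟫`
turns this into the claimed inequality.
-/

open scoped RealInnerProductSpace

section Bregman

variable {E : Type*} [NormedAddCommGroup E] [InnerProductSpace ℝ E]

noncomputable def bregmanDiv (f : E → ℝ) (f' : E → E) (x y : E) : ℝ :=
  f x - f y - ⟪f' y, x - y⟫

theorem bregmanDiv_sub_bregmanDiv_sub_bregmanDiv (f : E → ℝ) (f' : E → E) (x y a : E) :
    bregmanDiv f f' x a - bregmanDiv f f' y a - bregmanDiv f f' x y = ⟪f' y - f' a, x - y⟫ := by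
  have hsplit : x - a = (x - y) + (y - a) := by abel
  simp only [bregmanDiv, hsplit, inner_add_right, inner_sub_left]
  ring

variable [CompleteSpace E]

theorem IsMinOn.inner_gradient_sub_nonneg {g : E → ℝ} {g' : E} {s : Set E} {x y : E}
    (hmin : IsMinOn g s y) (hg : HasGradientAt g g' y) (hs : Convex ℝ s) (hy : y ∈ s)
    (hx : x ∈ s) : 0 ≤ ⟪g', x - y⟫ :=
  hmin.localize.hasFDerivWithinAt_nonneg hg.hasFDerivAt.hasFDerivWithinAt
    (sub_mem_posTangentConeAt_of_segment_subset (hs.segment_subset hy hx))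

theorem hasGradientAt_bregmanDiv_left {f : E → ℝ} {f' : E → E} {y : E} (a : E)
    (hf : HasGradientAt f (f' y) y) :
    HasGradientAt (fun z ↦ bregmanDiv f f' z a) (f' y - f' a) y := by
  rw [hasGradientAt_iff_hasFDerivAt, map_sub]
  have hlin : HasFDerivAt (fun z ↦ ⟪f' a, z - a⟫) (innerSL ℝ (f' a)) y :=
    (innerSL ℝ (f' a)).hasFDerivAt.comp y ((hasFDerivAt_id y).sub_const a)
  exact (hf.hasFDerivAt.sub_const (f a)).sub hlin

theorem IsMinOn.bregmanDiv_add_bregmanDiv_le {f : E → ℝ} {f' : E → E} {s : Set E} {a x y : E}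
    (hmin : IsMinOn (fun z ↦ bregmanDiv f f' z a) s y) (hf : HasGradientAt f (f' y) y)
    (hs : Convex ℝ s) (hy : y ∈ s) (hx : x ∈ s) :
    bregmanDiv f f' y a + bregmanDiv f f' x y ≤ bregmanDiv f f' x a := by
  have hvar := hmin.inner_gradient_sub_nonneg (hasGradientAt_bregmanDiv_left a hf) hs hy hx
  linarith [bregmanDiv_sub_bregmanDiv_sub_bregmanDiv f f' x y a]

end Bregman

theorem left_bregman_projection_three_point_convex_general {d : ℕ}
    (f : EuclideanSpace ℝ (Fin d) → ℝ)
    (f' : EuclideanSpace ℝ (Fin d) → EuclideanSpace ℝ (Fin d))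
    (G : Set (EuclideanSpace ℝ (Fin d)))
    (hgrad : ∀ w ∈ G, HasGradientAt f (f' w) w)
    (B : Set (EuclideanSpace ℝ (Fin d)))
    (hBconv : Convex ℝ B)
    (D : EuclideanSpace ℝ (Fin d) → EuclideanSpace ℝ (Fin d) → ℝ)
    (hD : ∀ x y, D x y = f x - f y - ⟪f' y, x - y⟫)
    (aplus bplus : EuclideanSpace ℝ (Fin d))
    (hbplusB : bplus ∈ B) (hbplusG : bplus ∈ G)
    (hmin : ∀ b ∈ B, D bplus aplus ≤ D b aplus) :
    ∀ b ∈ B, D b aplus ≥ D bplus aplus + D b bplus := by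
  obtain rfl : D = bregmanDiv f f' := funext₂ hD
  exact fun b hb ↦ IsMinOn.bregmanDiv_add_bregmanDiv_le hmin
    (hgrad bplus hbplusG) hBconv hbplusB hb

/-- For a closed convex set `B`, if `b⁺` is a left Bregman projection of `a⁺ ∈ G` onto `B`
with `b⁺ ∈ G`, then the rl-three-point inequality holds with constant `ℓ = 1`:
`D(b, a⁺) ≥ D(b⁺, a⁺) + D(b, b⁺)` for every `b ∈ B`. -/
theorem left_bregman_projection_three_point_convex {d : ℕ}
    (f : EuclideanSpace ℝ (Fin d) → ℝ)
    (f' : EuclideanSpace ℝ (Fin d) → EuclideanSpace ℝ (Fin d))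
    (G : Set (EuclideanSpace ℝ (Fin d))) (hG : IsOpen G)
    (hconv : ConvexOn ℝ Set.univ f)
    (hgrad : ∀ w ∈ G, HasGradientAt f (f' w) w)
    (B : Set (EuclideanSpace ℝ (Fin d)))
    (hBclosed : IsClosed B) (hBconv : Convex ℝ B)
    (D : EuclideanSpace ℝ (Fin d) → EuclideanSpace ℝ (Fin d) → ℝ)
    (hD : ∀ x y, D x y = f x - f y - ⟪f' y, x - y⟫)
    (aplus bplus : EuclideanSpace ℝ (Fin d))
    (haplus : aplus ∈ G) (hbplusB : bplus ∈ B) (hbplusG : bplus ∈ G)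
    (hmin : ∀ b ∈ B, D bplus aplus ≤ D b aplus) :
    ∀ b ∈ B, D b aplus ≥ D bplus aplus + D b bplus :=
  left_bregman_projection_three_point_convex_general f f' G hgrad B hBconv D hD aplus bplus hbplusB
    hbplusG hmin
end

section
/- Let A ⊂ G be closed and a⁺ ∈ A a right Bregman projection of b ∈ G onto A (minimizing D(b, ·) over A), with b ∉ A. Define b_λ = λb + (1-λ)a⁺. Then for every 0 ≤ λ < 1, a⁺ is a right Bregman projection of b_λ onto A. -/
open scoped RealInnerProductSpace

/-- Gradient inequality for convex functions. -/
lemma convex_gradient_ineq {d : ℕ} {f : EuclideanSpace ℝ (Fin d) → ℝ}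
    (hconv : ConvexOn ℝ Set.univ f) {g x : EuclideanSpace ℝ (Fin d)}
    (hg : HasGradientAt f g x) (y : EuclideanSpace ℝ (Fin d)) :
    f x + ⟪g, y - x⟫ ≤ f y := by
  set c : ℝ → EuclideanSpace ℝ (Fin d) := fun t => x + t • (y - x) with hc
  have hcd : HasDerivAt c (y - x) 0 := by
    have : HasDerivAt (fun t : ℝ => t • (y - x)) ((1 : ℝ) • (y - x)) 0 :=
      (hasDerivAt_id 0).smul_const (y - x)
    simpa [hc] using this.const_add x
  have hc0 : c 0 = x := by simp [hc]
  have hfd : HasDerivAt (f ∘ c) (⟪g, y - x⟫) 0 := by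
    have hF : HasFDerivAt f (InnerProductSpace.toDual ℝ _ g) x := hg
    rw [← hc0] at hF
    simpa using hF.comp_hasDerivAt 0 hcd
  have hφconv : ConvexOn ℝ Set.univ (f ∘ c) := by
    have := hconv.comp_affineMap (AffineMap.lineMap x y)
    have hcl : (f ∘ (AffineMap.lineMap x y)) = f ∘ c := by
      funext t
      simp [hc, AffineMap.lineMap_apply, Function.comp]
      congr 1
      module
    rw [hcl] at this
    simpa using this
  have := hφconv.le_slope_of_hasDerivAt (Set.mem_univ (0:ℝ)) (Set.mem_univ (1:ℝ))
    one_pos hfd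
  rw [slope_def_field] at this
  have h0 : (f ∘ c) 0 = f x := by simp [hc]
  have h1 : (f ∘ c) 1 = f y := by simp [hc]
  rw [sub_zero, div_one] at this
  linarith

/-- Right Bregman geodesics are straight lines: if `a⁺` is a right Bregman projection of
`b ∉ A` onto the closed set `A ⊆ G`, and `b_λ = λb + (1-λ)a⁺`, then `a⁺` is a right
Bregman projection of `b_λ` onto `A` for every `0 ≤ λ < 1`. -/
theorem right_bregman_perpendicular_projection {d : ℕ}
    (f : EuclideanSpace ℝ (Fin d) → ℝ)
    (f' : EuclideanSpace ℝ (Fin d) → EuclideanSpace ℝ (Fin d))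
    (G : Set (EuclideanSpace ℝ (Fin d))) (hG : IsOpen G)
    (hconv : ConvexOn ℝ Set.univ f)
    (hgrad : ∀ w ∈ G, HasGradientAt f (f' w) w)
    (A : Set (EuclideanSpace ℝ (Fin d))) (hAclosed : IsClosed A) (hAG : A ⊆ G)
    (D : EuclideanSpace ℝ (Fin d) → EuclideanSpace ℝ (Fin d) → ℝ)
    (hD : ∀ x y, D x y = f x - f y - ⟪f' y, x - y⟫)
    (b aplus : EuclideanSpace ℝ (Fin d))
    (hb : b ∈ G) (hbA : b ∉ A) (haplusA : aplus ∈ A)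
    (hmin : ∀ a ∈ A, D b aplus ≤ D b a) :
    ∀ l : ℝ, 0 ≤ l → l < 1 →
      ∀ a ∈ A, D (l • b + (1 - l) • aplus) aplus ≤ D (l • b + (1 - l) • aplus) a := by
  intro l hl0 hl1 a haA
  have hmin' := hmin a haA
  have hgradineq : f a + ⟪f' a, aplus - a⟫ ≤ f aplus :=
    convex_gradient_ineq hconv (hgrad a (hAG haA)) aplus
  set u := l • b + (1 - l) • aplus with hu
  have e1 : u - aplus = l • (b - aplus) := by
    simp [hu]; module
  have e2 : u - a = l • (b - a) + (1 - l) • (aplus - a) := by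
    simp [hu]; module
  rw [hD u aplus, hD u a, e1, e2, inner_smul_right, inner_add_right, inner_smul_right,
    inner_smul_right]
  rw [hD b aplus, hD b a] at hmin'
  have h1l : (0:ℝ) ≤ 1 - l := by linarith
  nlinarith [mul_nonneg hl0 (sub_nonneg.2 hmin'),
    mul_nonneg h1l (sub_nonneg.2 hgradineq)]
end

section
/- Let f be Legendre-type, 1-coercive (f(x)/‖x‖ → ∞), C¹ on G = int(dom f). Let b⁺ ∈ B be the left Bregman projection of a⁺ ∈ G \ B, with left perpendicular a_λ given by ∇f(a_λ) = ∇f(b⁺) + λ(∇f(a⁺) - ∇f(b⁺)) (defined for all λ ≥ 0 since dom f* = ℝ^d). Then for every b ∈ G with ⟨∇f(a⁺) - ∇f(b⁺), b - b⁺⟩ > 0, there exists λ > 0 with D(b, a_λ) < D(b⁺, a_λ); i.e., b eventually lies in the left Bregman ball centered at a_λ through b⁺. -/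
open scoped RealInnerProductSpace

/-- For a 1-coercive Legendre function, any point `b` strictly on the `a⁺` side of the
tangent hyperplane at `b⁺` (i.e. `⟨∇f(a⁺) - ∇f(b⁺), b - b⁺⟩ > 0`) eventually lies inside
the left Bregman balls along the perpendicular: there is `λ > 0` with
`D(b, a_λ) < D(b⁺, a_λ)`. -/
theorem coercive_perpendicular_ball_absorbs {d : ℕ}
    (f : EuclideanSpace ℝ (Fin d) → ℝ)
    (f' : EuclideanSpace ℝ (Fin d) → EuclideanSpace ℝ (Fin d))
    (G : Set (EuclideanSpace ℝ (Fin d))) (hG : IsOpen G)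
    (hconv : ConvexOn ℝ Set.univ f)
    (hcoercive : Filter.Tendsto (fun x : EuclideanSpace ℝ (Fin d) => f x / ‖x‖)
      (Filter.cocompact _) Filter.atTop)
    (hgrad : ∀ w ∈ G, HasGradientAt f (f' w) w)
    (B : Set (EuclideanSpace ℝ (Fin d))) (hBclosed : IsClosed B)
    (D : EuclideanSpace ℝ (Fin d) → EuclideanSpace ℝ (Fin d) → ℝ)
    (hD : ∀ x y, D x y = f x - f y - ⟪f' y, x - y⟫)
    (aplus bplus : EuclideanSpace ℝ (Fin d))
    (haplus : aplus ∈ G) (haplusB : aplus ∉ B)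
    (hbplusB : bplus ∈ B) (hbplusG : bplus ∈ G)
    (hmin : ∀ b' ∈ B, D bplus aplus ≤ D b' aplus)
    (aline : ℝ → EuclideanSpace ℝ (Fin d))
    (haline : ∀ l : ℝ, 0 ≤ l → aline l ∈ G ∧
      f' (aline l) = f' bplus + l • (f' aplus - f' bplus))
    (b : EuclideanSpace ℝ (Fin d)) (hbG : b ∈ G)
    (hside : 0 < ⟪f' aplus - f' bplus, b - bplus⟫) :
    ∃ l : ℝ, 0 < l ∧ D b (aline l) < D bplus (aline l) := by
  set c := ⟪f' aplus - f' bplus, b - bplus⟫ with hcdef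
  set C := f b - f bplus - ⟪f' bplus, b - bplus⟫ with hCdef
  set l := max 1 (C / c + 1) with hldef
  have hl1 : (1:ℝ) ≤ l := le_max_left _ _
  have hl0 : (0:ℝ) ≤ l := le_trans zero_le_one hl1
  refine ⟨l, lt_of_lt_of_le one_pos hl1, ?_⟩
  have hlc : C < l * c := by
    have h1 : C / c + 1 ≤ l := le_max_right _ _
    have h2 : C / c < l := lt_of_lt_of_le (lt_add_one _) h1
    have := (div_lt_iff₀ hside).mp h2
    linarith
  have hgl := (haline l hl0).2
  rw [hD, hD, hgl]
  have expand : ⟪f' bplus + l • (f' aplus - f' bplus), b - aline l⟫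
      - ⟪f' bplus + l • (f' aplus - f' bplus), bplus - aline l⟫
      = ⟪f' bplus, b - bplus⟫ + l * c := by
    simp only [hcdef, inner_add_left, real_inner_smul_left, inner_sub_right,
      inner_sub_left]
    ring
  linarith [expand]
end

section
/- Duality of the Kurdyka-Łojasiewicz inequality: let Φ(x,y) = (∇f(y), ∇f(x)) be a C¹-diffeomorphism between neighborhoods W of (x̄,ȳ) and V of (ū,v̄)=(∇f(ȳ),∇f(x̄)), with ‖Φ'(x,y)ᵀ‖ ≤ k⁻¹ on W, and let F* satisfy F(x,y) = F*(Φ(x,y)). If F satisfies the KŁ inequality φ'(F(x,y) - F(x̄,ȳ)) · dist(0, ∂F(x,y)) ≥ γ on W for values F(x̄,ȳ) < F < F(x̄,ȳ)+η, then F* satisfies the KŁ inequality on V with the same φ, η and constant kγ. -/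
open scoped RealInnerProductSpace
open Filter
open scoped Classical

variable {H : Type*} [NormedAddCommGroup H] [InnerProductSpace ℝ H]

/-- The Fréchet (regular) subdifferential of an extended-real-valued function. -/
def frechetSubdiff (F : H → EReal) (x : H) : Set H :=
  {v | ∃ fx : ℝ, F x = (fx : EReal) ∧ ∀ ε : ℝ, 0 < ε → ∃ δ : ℝ, 0 < δ ∧
    ∀ y : H, ‖y - x‖ < δ →
      ((fx + ⟪v, y - x⟫ - ε * ‖y - x‖ : ℝ) : EReal) ≤ F y}

/-- The limiting (Mordukhovich) subdifferential of an extended-real-valued function. -/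
def limitingSubdiff (F : H → EReal) (x : H) : Set H :=
  {v | ∃ xs vs : ℕ → H, (∀ k, vs k ∈ frechetSubdiff F (xs k)) ∧
    Tendsto xs atTop (nhds x) ∧ Tendsto vs atTop (nhds v) ∧
    Tendsto (fun k => F (xs k)) atTop (nhds (F x))}

/-! The chain rule sends `h ∈ ∂F*(Φ p)` to `Φ'(p)ᵀ h ∈ ∂F(p)`, whose norm is at most `k⁻¹ ‖h‖`;
the KŁ inequality for `F` at `p` then reads `γ ≤ φ'(t - c) k⁻¹ ‖h‖`. -/

theorem ContinuousLinearMap.mul_le_mul_norm_of_le_mul_norm_apply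
    {E F : Type*} [SeminormedAddCommGroup E] [SeminormedAddCommGroup F]
    [NormedSpace ℝ E] [NormedSpace ℝ F] (A : E →L[ℝ] F) {k γ a : ℝ} (hk : 0 < k)
    (hA : ‖A‖ ≤ k⁻¹) (ha : 0 ≤ a) {x : E} (h : γ ≤ a * ‖A x‖) : k * γ ≤ a * ‖x‖ := by
  have hAx : ‖A x‖ ≤ k⁻¹ * ‖x‖ :=
    (A.le_opNorm x).trans (mul_le_mul_of_nonneg_right hA (norm_nonneg x))
  calc k * γ ≤ k * (a * (k⁻¹ * ‖x‖)) := by gcongr; exact h.trans (by gcongr)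
    _ = a * ‖x‖ := by field_simp

/-- `φ'` is the derivative of the de-singularizing function. -/
def SatisfiesKL (F : H → EReal) (U : Set H) (c η γ : ℝ) (φ' : ℝ → ℝ) : Prop :=
  ∀ p ∈ U, ∀ t : ℝ, F p = (t : EReal) → c < t → t < c + η →
    ∀ g ∈ limitingSubdiff F p, γ ≤ φ' (t - c) * ‖g‖

theorem SatisfiesKL.image_of_comp {Φ : H → H} {A : H → H →L[ℝ] H} {W : Set H} {k : ℝ}
    (hk : 0 < k) (hA : ∀ p ∈ W, ‖A p‖ ≤ k⁻¹) {F Fs : H → EReal} (hFF : ∀ p, F p = Fs (Φ p))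
    (hchain : ∀ p ∈ W, A p '' limitingSubdiff Fs (Φ p) ⊆ limitingSubdiff F p)
    {c η γ : ℝ} {φ' : ℝ → ℝ} (hφ'pos : ∀ s ∈ Set.Ioo (0 : ℝ) η, 0 < φ' s)
    (hKL : SatisfiesKL F W c η γ φ') : SatisfiesKL Fs (Φ '' W) c η (k * γ) φ' := by
  rintro _ ⟨p, hpW, rfl⟩ t hFst hct htc h hh
  have hφ'nonneg : 0 ≤ φ' (t - c) := (hφ'pos _ ⟨by linarith, by linarith⟩).le
  exact (A p).mul_le_mul_norm_of_le_mul_norm_apply hk (hA p hpW) hφ'nonneg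
    (hKL p hpW t (by rw [hFF, hFst]) hct htc _ (hchain p hpW ⟨h, hh, rfl⟩))

theorem kl_inequality_duality_general {d : ℕ}
    (Φ : WithLp 2 (EuclideanSpace ℝ (Fin d) × EuclideanSpace ℝ (Fin d)) →
         WithLp 2 (EuclideanSpace ℝ (Fin d) × EuclideanSpace ℝ (Fin d)))
    (W V : Set (WithLp 2 (EuclideanSpace ℝ (Fin d) × EuclideanSpace ℝ (Fin d))))
    (hWV : Φ '' W = V)
    (Φ' : WithLp 2 (EuclideanSpace ℝ (Fin d) × EuclideanSpace ℝ (Fin d)) →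
      WithLp 2 (EuclideanSpace ℝ (Fin d) × EuclideanSpace ℝ (Fin d)) →L[ℝ]
      WithLp 2 (EuclideanSpace ℝ (Fin d) × EuclideanSpace ℝ (Fin d)))
    (k : ℝ) (hk : 0 < k)
    (hbound : ∀ p ∈ W, ‖ContinuousLinearMap.adjoint (Φ' p)‖ ≤ k⁻¹)
    (F Fs : WithLp 2 (EuclideanSpace ℝ (Fin d) × EuclideanSpace ℝ (Fin d)) → EReal)
    (hFF : ∀ p, F p = Fs (Φ p))
    (hchain : ∀ p ∈ W, limitingSubdiff F p =
      (fun h => ContinuousLinearMap.adjoint (Φ' p) h) '' limitingSubdiff Fs (Φ p))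
    (pbar : WithLp 2 (EuclideanSpace ℝ (Fin d) × EuclideanSpace ℝ (Fin d)))
    (c : ℝ) (hc : F pbar = (c : EReal))
    -- the de-singularizing function
    (φ' : ℝ → ℝ) (η γ : ℝ)
    (hφ'pos : ∀ s ∈ Set.Ioo (0 : ℝ) η, 0 < φ' s)
    -- the KŁ inequality for F on W
    (hKL : ∀ p ∈ W, ∀ t : ℝ, F p = (t : EReal) → c < t → t < c + η →
      ∀ g ∈ limitingSubdiff F p, γ ≤ φ' (t - c) * ‖g‖) :
    Fs (Φ pbar) = (c : EReal) ∧
    ∀ q ∈ V, ∀ t : ℝ, Fs q = (t : EReal) → c < t → t < c + η →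
      ∀ h ∈ limitingSubdiff Fs q, k * γ ≤ φ' (t - c) * ‖h‖ := by
  refine ⟨hFF pbar ▸ hc, ?_⟩
  subst hWV
  exact SatisfiesKL.image_of_comp hk hbound hFF (fun p hp => (hchain p hp).symm.subset)
    hφ'pos hKL

/-- Duality of the Kurdyka-Łojasiewicz inequality: if `F = F* ∘ Φ` for the C¹
diffeomorphism `Φ(x,y) = (∇f(y), ∇f(x))` between `W` and `V = Φ(W)`, the chain rule
`∂F(p) = Φ'(p)ᵀ ∂F*(Φ(p))` holds on `W`, and `‖Φ'(p)ᵀ‖ ≤ k⁻¹` on `W`, then the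
KŁ inequality for `F` on `W` (with de-singularizer `φ` and constant `γ`) transfers to a
KŁ inequality for `F*` on `V` with the same `φ`, `η` and constant `kγ`. -/
theorem kl_inequality_duality {d : ℕ}
    (f' : EuclideanSpace ℝ (Fin d) → EuclideanSpace ℝ (Fin d))
    (Φ : WithLp 2 (EuclideanSpace ℝ (Fin d) × EuclideanSpace ℝ (Fin d)) →
         WithLp 2 (EuclideanSpace ℝ (Fin d) × EuclideanSpace ℝ (Fin d)))
    (hΦ : ∀ p, Φ p =
      (WithLp.equiv 2 (EuclideanSpace ℝ (Fin d) × EuclideanSpace ℝ (Fin d))).symm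
        (f' p.ofLp.2, f' p.ofLp.1))
    (W V : Set (WithLp 2 (EuclideanSpace ℝ (Fin d) × EuclideanSpace ℝ (Fin d))))
    (hWopen : IsOpen W) (hVopen : IsOpen V)
    (hWV : Φ '' W = V) (hinj : Set.InjOn Φ W)
    (Φ' : WithLp 2 (EuclideanSpace ℝ (Fin d) × EuclideanSpace ℝ (Fin d)) →
      WithLp 2 (EuclideanSpace ℝ (Fin d) × EuclideanSpace ℝ (Fin d)) →L[ℝ]
      WithLp 2 (EuclideanSpace ℝ (Fin d) × EuclideanSpace ℝ (Fin d)))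
    (hΦdiff : ∀ p ∈ W, HasFDerivAt Φ (Φ' p) p)
    (k : ℝ) (hk : 0 < k)
    (hbound : ∀ p ∈ W, ‖ContinuousLinearMap.adjoint (Φ' p)‖ ≤ k⁻¹)
    (F Fs : WithLp 2 (EuclideanSpace ℝ (Fin d) × EuclideanSpace ℝ (Fin d)) → EReal)
    (hFF : ∀ p, F p = Fs (Φ p))
    (hchain : ∀ p ∈ W, limitingSubdiff F p =
      (fun h => ContinuousLinearMap.adjoint (Φ' p) h) '' limitingSubdiff Fs (Φ p))
    (pbar : WithLp 2 (EuclideanSpace ℝ (Fin d) × EuclideanSpace ℝ (Fin d)))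
    (hpbarW : pbar ∈ W)
    (c : ℝ) (hc : F pbar = (c : EReal))
    -- the de-singularizing function
    (φ φ' : ℝ → ℝ) (η γ : ℝ) (hη : 0 < η) (hγ : 0 < γ)
    (hφ0 : φ 0 = 0) (hφcont : ContinuousOn φ (Set.Ico 0 η))
    (hφconc : ConcaveOn ℝ (Set.Ico 0 η) φ)
    (hφdiff : ∀ s ∈ Set.Ioo (0 : ℝ) η, HasDerivAt φ (φ' s) s)
    (hφ'pos : ∀ s ∈ Set.Ioo (0 : ℝ) η, 0 < φ' s)
    -- the KŁ inequality for F on W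
    (hKL : ∀ p ∈ W, ∀ t : ℝ, F p = (t : EReal) → c < t → t < c + η →
      ∀ g ∈ limitingSubdiff F p, γ ≤ φ' (t - c) * ‖g‖) :
    Fs (Φ pbar) = (c : EReal) ∧
    ∀ q ∈ V, ∀ t : ℝ, Fs q = (t : EReal) → c < t → t < c + η →
      ∀ h ∈ limitingSubdiff Fs q, k * γ ≤ φ' (t - c) * ‖h‖ :=
  kl_inequality_duality_general Φ W V hWV Φ' k hk hbound F Fs hFF hchain pbar c hc φ' η γ hφ'pos hKL
end

section
/- Rate extraction from the summed recursion: let S_N ≥ 0 be nonincreasing with S_N → 0 and suppose S_N ≤ C'(S_{N-1} - S_N)^{(1-θ)/θ} + ½(S_{N-1}-S_N) for all N large and some θ ∈ (½, 1), C' > 0. Then S_N = O(N^{-(1-θ)/(2θ-1)}). -/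
/-!
Put `α = (1 - θ) / θ` and `p = (2θ - 1) / (1 - θ)`, so that `p + 1 = α⁻¹`. Once `S N ≤ 1` we have
`d ≤ d ^ α` for `d = S N - S (N + 1)`, and the recursion becomes
`S (N + 1) ^ (p + 1) ≤ K (S N - S (N + 1))`. Then `S N ^ (-p)` increases by a fixed `ε > 0` at
each step: if `S (N + 1) ≥ S N / 2` by the tangent line of the convex function `t ↦ t ^ (-p)`, and
otherwise because `S (N + 1) ^ (-p) ≥ 2 ^ p S N ^ (-p)`. So `S N ^ (-p) ≳ N`, i.e. `S N ≲ N ^ (-1/p)`.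
-/

open Filter Asymptotics

/-- Tangent-line inequality for the convex function `t ↦ t ^ (-p)` at `a`. -/
theorem Real.rpow_neg_add_mul_sub_le {p a b : ℝ} (hp : 0 ≤ p) (hb : 0 < b) (hba : b ≤ a) :
    a ^ (-p) + p * (a - b) * a ^ (-(p + 1)) ≤ b ^ (-p) := by
  set t := a / b
  have ha : a = b * t := (mul_div_cancel₀ a hb.ne').symm
  have ht : 1 ≤ t := by rwa [le_div_iff₀ hb, one_mul]
  have ht0 : 0 < t := by linarith
  have hbern : t + p * (t - 1) ≤ t ^ (p + 1) := by
    have := one_add_mul_self_le_rpow_one_add (s := t - 1) (by linarith) (p := p + 1) (by linarith)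
    rw [add_sub_cancel] at this
    linarith
  have htp : t ^ (-p) = t * t ^ (-(p + 1)) := by
    rw [show -p = 1 + -(p + 1) by ring, Real.rpow_add ht0, Real.rpow_one]
  have hbp : b ^ (-(p + 1)) = b ^ (-p) * b⁻¹ := by
    rw [neg_add, Real.rpow_add hb, Real.rpow_neg_one]
  have hcancel : t ^ (-(p + 1)) * t ^ (p + 1) = 1 := by
    rw [← Real.rpow_add ht0, neg_add_cancel, Real.rpow_zero]
  calc a ^ (-p) + p * (a - b) * a ^ (-(p + 1))
      = b ^ (-p) * t ^ (-(p + 1)) * (t + p * (t - 1)) := by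
        rw [ha, Real.mul_rpow hb.le ht0.le, Real.mul_rpow hb.le ht0.le, htp, hbp]
        field_simp
    _ ≤ b ^ (-p) * t ^ (-(p + 1)) * t ^ (p + 1) := by gcongr
    _ = b ^ (-p) := by rw [mul_assoc, hcancel, mul_one]

theorem min_le_rpow_neg_sub_rpow_neg {p c a b A : ℝ} (hp : 0 < p) (hc : 0 ≤ c) (hb : 0 < b)
    (hba : b ≤ a) (haA : a ≤ A) (hstep : c * b ^ (p + 1) ≤ a - b) :
    min (p * c * 2 ^ (-(p + 1))) ((2 ^ p - 1) * A ^ (-p)) ≤ b ^ (-p) - a ^ (-p) := by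
  have ha : 0 < a := hb.trans_le hba
  rcases le_or_gt a (2 * b) with hslow | hfast
  · refine (min_le_left _ _).trans ?_
    have hratio : (2 : ℝ) ^ (-(p + 1)) ≤ b ^ (p + 1) * a ^ (-(p + 1)) := by
      rw [Real.rpow_neg zero_le_two, Real.rpow_neg ha.le, ← div_eq_mul_inv,
        ← Real.div_rpow hb.le ha.le, ← Real.inv_rpow zero_le_two]
      gcongr
      rw [le_div_iff₀ ha]
      linarith
    calc p * c * 2 ^ (-(p + 1)) ≤ p * (c * b ^ (p + 1)) * a ^ (-(p + 1)) := by
          rw [mul_assoc p c, mul_assoc, mul_assoc]; gcongr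
      _ ≤ p * (a - b) * a ^ (-(p + 1)) := by gcongr
      _ ≤ b ^ (-p) - a ^ (-p) := by linarith [Real.rpow_neg_add_mul_sub_le hp.le hb hba]
  · refine (min_le_right _ _).trans ?_
    have h2p : 1 ≤ (2 : ℝ) ^ p := Real.one_le_rpow one_le_two hp.le
    have hhalf : 2 ^ p * a ^ (-p) ≤ b ^ (-p) := by
      calc 2 ^ p * a ^ (-p) = (a / 2) ^ (-p) := by
            rw [Real.div_rpow ha.le zero_le_two, Real.rpow_neg zero_le_two, div_inv_eq_mul, mul_comm]
        _ ≤ b ^ (-p) := Real.rpow_le_rpow_of_nonpos hb (by linarith) (by linarith)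
    have hA : A ^ (-p) ≤ a ^ (-p) := Real.rpow_le_rpow_of_nonpos ha haA (by linarith)
    nlinarith

theorem exists_pos_rpow_neg_add_le_succ {a : ℕ → ℝ} {p c : ℝ} {N : ℕ} (hpos : ∀ n, 0 < a n)
    (hanti : Antitone a) (hp : 0 < p) (hc : 0 < c)
    (hstep : ∀ n ≥ N, c * a (n + 1) ^ (p + 1) ≤ a n - a (n + 1)) :
    ∃ ε > 0, ∀ n ≥ N, a n ^ (-p) + ε ≤ a (n + 1) ^ (-p) := by
  refine ⟨min (p * c * 2 ^ (-(p + 1))) ((2 ^ p - 1) * a N ^ (-p)), ?_, fun n hn => ?_⟩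
  · have h2p : 1 < (2 : ℝ) ^ p := Real.one_lt_rpow one_lt_two hp
    have haN := hpos N
    exact lt_min (by positivity) (mul_pos (by linarith) (by positivity))
  · linarith [min_le_rpow_neg_sub_rpow_neg hp hc.le (hpos (n + 1)) (hanti n.le_succ) (hanti hn)
      (hstep n hn)]

theorem add_mul_sub_le_of_add_le_succ {u : ℕ → ℝ} {ε : ℝ} {N : ℕ}
    (h : ∀ n ≥ N, u n + ε ≤ u (n + 1)) : ∀ n ≥ N, u N + ε * (n - N) ≤ u n := by
  intro n hn
  induction n, hn using Nat.le_induction with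
  | base => simp
  | succ n hn ih => push_cast; linarith [h n hn]

theorem isBigO_rpow_neg_inv_of_mul_le_rpow_neg {a : ℕ → ℝ} {p ε : ℝ} (ha : ∀ n, 0 ≤ a n)
    (hp : 0 < p) (hε : 0 < ε) (h : ∀ᶠ n in atTop, ε * n ≤ a n ^ (-p)) :
    a =O[atTop] fun n => (n : ℝ) ^ (-p⁻¹) := by
  refine IsBigO.of_bound (ε ^ (-p⁻¹)) ?_
  filter_upwards [h, eventually_gt_atTop 0] with n hn hn0
  have hn0' : (0 : ℝ) < n := Nat.cast_pos.2 hn0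
  rw [Real.norm_of_nonneg (ha n), Real.norm_of_nonneg (by positivity),
    ← Real.mul_rpow hε.le hn0'.le]
  calc a n = (a n ^ (-p)) ^ (-p)⁻¹ := (Real.rpow_rpow_inv (ha n) (neg_ne_zero.2 hp.ne')).symm
    _ ≤ (ε * n) ^ (-p⁻¹) := by
      rw [inv_neg]
      exact Real.rpow_le_rpow_of_nonpos (by positivity) hn (by simpa using hp.le)

theorem isBigO_rpow_neg_inv_of_mul_rpow_le_sub {a : ℕ → ℝ} {p c : ℝ} (ha : ∀ n, 0 ≤ a n)
    (hanti : Antitone a) (hp : 0 < p) (hc : 0 < c)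
    (hstep : ∀ᶠ n in atTop, c * a (n + 1) ^ (p + 1) ≤ a n - a (n + 1)) :
    a =O[atTop] fun n => (n : ℝ) ^ (-p⁻¹) := by
  by_cases hzero : ∃ M, a M = 0
  · obtain ⟨M, hM⟩ := hzero
    have hev : a =ᶠ[atTop] fun _ => 0 := by
      filter_upwards [eventually_ge_atTop M] with n hn
      exact le_antisymm (hM ▸ hanti hn) (ha n)
    exact hev.trans_isBigO (isBigO_zero _ _)
  push Not at hzero
  have hpos : ∀ n, 0 < a n := fun n => (ha n).lt_of_ne (hzero n).symm
  obtain ⟨N, hN⟩ := eventually_atTop.1 hstep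
  obtain ⟨ε, hε, hinc⟩ := exists_pos_rpow_neg_add_le_succ hpos hanti hp hc hN
  -- `a n ^ (-p) ≥ ε (n - N) ≥ ε n / 2` once `n ≥ 2N`.
  refine isBigO_rpow_neg_inv_of_mul_le_rpow_neg ha hp (half_pos hε) ?_
  filter_upwards [eventually_ge_atTop (2 * N)] with n hn
  have hgrowth := add_mul_sub_le_of_add_le_succ hinc n (by omega)
  have hn' : 2 * (N : ℝ) ≤ n := by exact_mod_cast hn
  have huN := Real.rpow_nonneg (ha N) (-p)
  nlinarith

theorem rpow_inv_le_mul_of_le_mul_rpow_add {α C s d : ℝ} (hα0 : 0 < α) (hα1 : α ≤ 1) (hC : 0 ≤ C)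
    (hs : 0 ≤ s) (hd0 : 0 ≤ d) (hd1 : d ≤ 1) (h : s ≤ C * d ^ α + 1 / 2 * d) :
    s ^ α⁻¹ ≤ (C + 1 / 2) ^ α⁻¹ * d := by
  have hdα : d ≤ d ^ α := Real.self_le_rpow_of_le_one hd0 hd1 hα1
  have hs' : s ≤ (C + 1 / 2) * d ^ α := by linarith
  calc s ^ α⁻¹ ≤ ((C + 1 / 2) * d ^ α) ^ α⁻¹ := by gcongr
    _ = (C + 1 / 2) ^ α⁻¹ * d := by
      rw [Real.mul_rpow (by positivity) (by positivity), Real.rpow_rpow_inv hd0 hα0.ne']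

/-- Sublinear rate extraction: for a nonnegative nonincreasing `S_N → 0` satisfying
`S_N ≤ C'(S_{N-1} - S_N)^{(1-θ)/θ} + ½(S_{N-1} - S_N)` eventually, with `θ ∈ (½,1)`,
one has `S_N = O(N^{-(1-θ)/(2θ-1)})`. -/
theorem sublinear_rate_from_recursion (S : ℕ → ℝ)
    (hnn : ∀ N, 0 ≤ S N) (hanti : Antitone S)
    (hlim : Tendsto S atTop (nhds 0))
    (θ C' : ℝ) (hθ1 : 1 / 2 < θ) (hθ2 : θ < 1) (hC : 0 < C') (N₀ : ℕ)
    (hrec : ∀ N ≥ N₀, S (N + 1) ≤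
      C' * (S N - S (N + 1)) ^ ((1 - θ) / θ) + (1 / 2) * (S N - S (N + 1))) :
    (fun N : ℕ => S N) =O[atTop]
      (fun N : ℕ => (N : ℝ) ^ (-((1 - θ) / (2 * θ - 1)))) := by
  set α := (1 - θ) / θ
  set p := (2 * θ - 1) / (1 - θ)
  have hα0 : 0 < α := div_pos (by linarith) (by linarith)
  have hα1 : α ≤ 1 := (div_le_one (by linarith)).2 (by linarith)
  have hp : 0 < p := div_pos (by linarith) (by linarith)
  have hpα : p + 1 = α⁻¹ := by
    simp only [p, α, inv_div]
    field_simp [show 1 - θ ≠ 0 by linarith]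
    ring
  have hK : 0 < (C' + 1 / 2) ^ α⁻¹ := by positivity
  have hstep :
      ∀ᶠ N in atTop, ((C' + 1 / 2) ^ α⁻¹)⁻¹ * S (N + 1) ^ (p + 1) ≤ S N - S (N + 1) := by
    filter_upwards [eventually_ge_atTop N₀, hlim.eventually (ge_mem_nhds one_pos)] with N hN hS1
    rw [hpα, inv_mul_le_iff₀ hK]
    exact rpow_inv_le_mul_of_le_mul_rpow_add hα0 hα1 hC.le (hnn _)
      (sub_nonneg.2 (hanti N.le_succ)) (by linarith [hnn (N + 1)]) (hrec N hN)
  simpa only [p, inv_div] using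
    isBigO_rpow_neg_inv_of_mul_rpow_le_sub hnn hanti hp (inv_pos.2 hK) hstep
end

section
/- Let B ⊂ ℝ^d, b⁺ ∈ B, d a unit vector, and suppose every Euclidean ball of radius R̃ centered at b⁺ + sd for 0 < s ≤ R̃ that has b⁺ on its boundary contains no point of B in its interior (reach of B at b⁺ in direction d is at least R̃). Then for every b ∈ B with β = ∠(b - b⁺, d) < 90°, ‖b - b⁺‖ ≥ 2 R̃ cos β. -/
open scoped RealInnerProductSpace

/-- If the reach of `B` at `b⁺ ∈ B` in the unit direction `d` is at least `R̃ > 0`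
(every Euclidean ball of radius `s ≤ R̃` centered at `b⁺ + s d`, which has `b⁺` on its
boundary, contains no point of `B` in its interior), then every `b ∈ B` with angle
`β = ∠(b - b⁺, d) < 90°` satisfies `‖b - b⁺‖ ≥ 2 R̃ cos β`. -/
theorem reach_lower_bound_distance {n : ℕ}
    (B : Set (EuclideanSpace ℝ (Fin n)))
    (bplus : EuclideanSpace ℝ (Fin n)) (hbplus : bplus ∈ B)
    (dvec : EuclideanSpace ℝ (Fin n)) (hunit : ‖dvec‖ = 1)
    (Rt : ℝ) (hRt : 0 < Rt)
    (hreach : ∀ s : ℝ, 0 < s → s ≤ Rt →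
      ∀ y ∈ B, ¬ dist y (bplus + s • dvec) < s) :
    ∀ b ∈ B, 0 < ⟪b - bplus, dvec⟫ →
      ‖b - bplus‖ ≥ 2 * Rt * (⟪b - bplus, dvec⟫ / ‖b - bplus‖) := by
  intro b hb hpos
  have hv : b - bplus ≠ 0 := by
    intro h
    rw [h, inner_zero_left] at hpos
    exact lt_irrefl 0 hpos
  have hn : 0 < ‖b - bplus‖ := norm_pos_iff.mpr hv
  have key := hreach Rt hRt le_rfl b hb
  rw [dist_eq_norm] at key
  have h1 : b - (bplus + Rt • dvec) = (b - bplus) - Rt • dvec := by abel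
  rw [h1] at key
  have hsq : ‖(b - bplus) - Rt • dvec‖ ^ 2
      = ‖b - bplus‖ ^ 2 - 2 * Rt * ⟪b - bplus, dvec⟫ + Rt ^ 2 := by
    rw [norm_sub_sq_real, real_inner_smul_right, norm_smul, Real.norm_eq_abs,
      abs_of_pos hRt, hunit]
    ring
  push_neg at key
  have h2 : 2 * Rt * ⟪b - bplus, dvec⟫ ≤ ‖b - bplus‖ ^ 2 := by
    nlinarith [key, hsq, norm_nonneg ((b - bplus) - Rt • dvec)]
  have heq : 2 * Rt * (⟪b - bplus, dvec⟫ / ‖b - bplus‖)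
      = (2 * Rt * ⟪b - bplus, dvec⟫) / ‖b - bplus‖ := by ring
  rw [ge_iff_le, heq, div_le_iff₀ hn]
  nlinarith [h2]
end
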